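/- Let L : ℝ^d → ℝ be c_s-strongly convex with minimum L_*, differentiable with L_g-Lipschitz gradient, and suppose the stochastic gradient over a batch of size b_t has mean ∇L(θ_t) and variance at most (M + M_v‖∇L(θ_t)‖²)/b_t. If 0 < η₀ ≤ 1/(L_g(M_v + B_max)) and 1 ≤ b_t ≤ B_max, then one SGD step θ_{t+1} = θ_t - b_t η₀ g_t satisfies E[L(θ_{t+1})] - L_* ≤ (1 - b_t η₀ c_s)(L(θ_t) - L_*) + (1/2) b_t η₀² L_g M. -/

import Mathlib

/-!
Smoothness gives the descent inequality `L (θ - η g) ≤ L θ - η ⟪∇L θ, g⟫ + L_g/2 η² ‖g‖²`.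
Taking expectations and writing `E‖g‖² = ‖∇L θ‖² + E‖g - ∇L θ‖²`, the variance bound and the
step-size condition `L_g η₀ (M_v + b_t) ≤ 1` absorb the gradient-dependent part of the quadratic
term into half of the descent `-η ‖∇L θ‖²`. The remaining `-η ‖∇L θ‖² / 2` becomes the
contraction factor through the Polyak–Łojasiewicz inequality `‖∇L θ‖² ≥ 2 c_s (L θ - L_*)`,
a consequence of strong convexity.
-/

open MeasureTheory
open scoped RealInnerProductSpace

section

variable {E : Type*} [NormedAddCommGroup E] [InnerProductSpace ℝ E]

-- The Polyak–Łojasiewicz inequality: complete the square in `u`.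
theorem two_mul_sub_le_norm_sq_of_add_inner_add_le {c a b : ℝ} (hc : 0 < c) {G u : E}
    (h : a + ⟪G, u⟫ + c / 2 * ‖u‖ ^ 2 ≤ b) : 2 * c * (a - b) ≤ ‖G‖ ^ 2 := by
  have hsq : 0 ≤ ‖G + c • u‖ ^ 2 := sq_nonneg _
  rw [norm_add_sq_real, real_inner_smul_right, norm_smul, Real.norm_of_nonneg hc.le] at hsq
  nlinarith

variable [CompleteSpace E] {f : E → ℝ}

theorem hasDerivAt_comp_add_smul_gradient (hf : Differentiable ℝ f) (x v : E) (t : ℝ) :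
    HasDerivAt (fun s : ℝ => f (x + s • v)) ⟪gradient f (x + t • v), v⟫ t := by
  have hline : HasDerivAt (fun s : ℝ => x + s • v) v t := by
    simpa using ((hasDerivAt_id t).smul_const v).const_add x
  simpa [Function.comp_def, inner_gradient_left] using
    (hf (x + t • v)).hasFDerivAt.comp_hasDerivAt t hline

theorem le_add_inner_gradient_add_of_lipschitz_gradient (hf : Differentiable ℝ f) {K : ℝ}
    (hK : ∀ x y, ‖gradient f x - gradient f y‖ ≤ K * ‖x - y‖) (x v : E) :
    f (x + v) ≤ f x + ⟪gradient f x, v⟫ + K / 2 * ‖v‖ ^ 2 := by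
  set ψ : ℝ → ℝ := fun t => f (x + t • v) - t * ⟪gradient f x, v⟫ - K / 2 * t ^ 2 * ‖v‖ ^ 2
  have hψ (t : ℝ) :
      HasDerivAt ψ (⟪gradient f (x + t • v) - gradient f x, v⟫ - K * t * ‖v‖ ^ 2) t := by
    have hlin : HasDerivAt (fun s : ℝ => s * ⟪gradient f x, v⟫) ⟪gradient f x, v⟫ t := by
      simpa using (hasDerivAt_id t).mul_const ⟪gradient f x, v⟫
    have hquad : HasDerivAt (fun s : ℝ => K / 2 * s ^ 2 * ‖v‖ ^ 2) (K * t * ‖v‖ ^ 2) t := by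
      refine (((hasDerivAt_pow 2 t).const_mul (K / 2)).mul_const (‖v‖ ^ 2)).congr_deriv ?_
      simp only [Nat.cast_ofNat, Nat.add_one_sub_one, pow_one]
      ring
    rw [inner_sub_left]
    exact ((hasDerivAt_comp_add_smul_gradient hf x v t).sub hlin).sub hquad
  have hψ_nonpos (t : ℝ) (ht : 0 < t) :
      ⟪gradient f (x + t • v) - gradient f x, v⟫ - K * t * ‖v‖ ^ 2 ≤ 0 := by
    have := calc ⟪gradient f (x + t • v) - gradient f x, v⟫
        ≤ ‖gradient f (x + t • v) - gradient f x‖ * ‖v‖ := real_inner_le_norm _ _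
      _ ≤ K * ‖t • v‖ * ‖v‖ := by
          gcongr
          simpa using hK (x + t • v) x
      _ = K * t * ‖v‖ ^ 2 := by rw [norm_smul, Real.norm_of_nonneg ht.le]; ring
    linarith
  have hanti : AntitoneOn ψ (Set.Icc 0 1) :=
    antitoneOn_of_deriv_nonpos (convex_Icc 0 1)
      (HasDerivAt.continuousOn fun t _ => hψ t)
      (fun t _ => (hψ t).differentiableAt.differentiableWithinAt)
      (fun t ht => by
        rw [interior_Icc] at ht
        exact (hψ t).deriv ▸ hψ_nonpos t ht.1)
  have := hanti (by simp) (by simp) zero_le_one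
  simp only [ψ, one_smul, zero_smul, add_zero, one_mul, one_pow, mul_one, zero_mul, sub_zero,
    ne_eq, OfNat.ofNat_ne_zero, not_false_eq_true, zero_pow, mul_zero] at this
  linarith

variable {Ω : Type*} [MeasurableSpace Ω] {μ : Measure Ω} {g : Ω → E}

theorem integral_norm_sub_integral_sq [IsProbabilityMeasure μ] (hg : Integrable g μ)
    (hg2 : Integrable (fun ω => ‖g ω‖ ^ 2) μ) :
    ∫ ω, ‖g ω - ∫ ω', g ω' ∂μ‖ ^ 2 ∂μ = ∫ ω, ‖g ω‖ ^ 2 ∂μ - ‖∫ ω, g ω ∂μ‖ ^ 2 := by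
  set m := ∫ ω, g ω ∂μ
  have hinner : Integrable (fun ω => ⟪m, g ω⟫) μ := by
    simpa using (innerSL ℝ m).integrable_comp hg
  have hexpand : Integrable (fun ω => ‖g ω‖ ^ 2 - 2 * ⟪m, g ω⟫) μ := hg2.sub (hinner.const_mul 2)
  simp_rw [norm_sub_sq_real, real_inner_comm m]
  rw [integral_add hexpand (integrable_const _),
    integral_sub hg2 (hinner.const_mul 2), integral_const_mul]
  simp [integral_inner hg, m]
  ring

theorem integral_comp_sub_smul_le_of_lipschitz_gradient [IsProbabilityMeasure μ]
    (hf : Differentiable ℝ f) {K : ℝ}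
    (hK : ∀ x y, ‖gradient f x - gradient f y‖ ≤ K * ‖x - y‖) (x : E) (η : ℝ)
    (hg : Integrable g μ) (hg2 : Integrable (fun ω => ‖g ω‖ ^ 2) μ)
    (hfg : Integrable (fun ω => f (x - η • g ω)) μ) :
    ∫ ω, f (x - η • g ω) ∂μ ≤
      f x - η * ⟪gradient f x, ∫ ω, g ω ∂μ⟫ + K / 2 * η ^ 2 * ∫ ω, ‖g ω‖ ^ 2 ∂μ := by
  set G := gradient f x
  have hpoint (ω : Ω) :
      f (x - η • g ω) ≤ f x - η * ⟪G, g ω⟫ + K / 2 * η ^ 2 * ‖g ω‖ ^ 2 := by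
    have := le_add_inner_gradient_add_of_lipschitz_gradient hf hK x (-(η • g ω))
    rw [← sub_eq_add_neg, inner_neg_right, real_inner_smul_right, norm_neg, norm_smul,
      mul_pow, Real.norm_eq_abs, sq_abs] at this
    linarith
  have hinner : Integrable (fun ω => ⟪G, g ω⟫) μ := by
    simpa using (innerSL ℝ G).integrable_comp hg
  have hlin : Integrable (fun ω => f x - η * ⟪G, g ω⟫) μ :=
    (integrable_const _).sub (hinner.const_mul η)
  have hquad : Integrable (fun ω => K / 2 * η ^ 2 * ‖g ω‖ ^ 2) μ := hg2.const_mul _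
  have hbound : Integrable (fun ω => f x - η * ⟪G, g ω⟫ + K / 2 * η ^ 2 * ‖g ω‖ ^ 2) μ :=
    hlin.add hquad
  refine (integral_mono hfg hbound hpoint).trans_eq ?_
  rw [integral_add hlin hquad,
    integral_sub (integrable_const _) (hinner.const_mul η), integral_const_mul,
    integral_const_mul, integral_inner hg]
  simp

end

theorem abs_one_step_bound_general {d : ℕ} {Ω : Type*} [MeasurableSpace Ω]
    (μ : Measure Ω) [IsProbabilityMeasure μ]
    (L : EuclideanSpace ℝ (Fin d) → ℝ) (cs Lg M Mv η0 bt Bmax Lstar : ℝ)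
    (θstar θt : EuclideanSpace ℝ (Fin d)) (g : Ω → EuclideanSpace ℝ (Fin d))
    (hdiff : ContDiff ℝ 1 L) (hcs : 0 < cs)
    (hconv : ∀ θ1 θ2, L θ1 + ⟪gradient L θ1, θ2 - θ1⟫ + cs / 2 * ‖θ2 - θ1‖ ^ 2 ≤ L θ2)
    (hmin : L θstar = Lstar)
    (hLg : 0 < Lg)
    (hLip : ∀ x y, ‖gradient L x - gradient L y‖ ≤ Lg * ‖x - y‖)
    (hη : 0 < η0) (hη2 : η0 ≤ 1 / (Lg * (Mv + Bmax)))
    (hbt : 1 ≤ bt) (hbB : bt ≤ Bmax)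
    (hint : Integrable g μ) (hint2 : Integrable (fun ω => ‖g ω‖ ^ 2) μ)
    (hintL : Integrable (fun ω => L (θt - (bt * η0) • g ω)) μ)
    (hmean : ∫ ω, g ω ∂μ = gradient L θt)
    (hvar : ∫ ω, ‖g ω - gradient L θt‖ ^ 2 ∂μ ≤ (M + Mv * ‖gradient L θt‖ ^ 2) / bt) :
    (∫ ω, L (θt - (bt * η0) • g ω) ∂μ) - Lstar ≤
      (1 - bt * η0 * cs) * (L θt - Lstar) + 1/2 * bt * η0 ^ 2 * Lg * M := by
  have hbt0 : 0 < bt := one_pos.trans_le hbt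
  have hstep : Lg * η0 * (Mv + bt) ≤ 1 := by
    have hP : 0 < Lg * (Mv + Bmax) := one_div_pos.mp (hη.trans_le hη2)
    calc Lg * η0 * (Mv + bt) ≤ Lg * η0 * (Mv + Bmax) := by gcongr
      _ = η0 * (Lg * (Mv + Bmax)) := by ring
      _ ≤ 1 := (le_div_iff₀ hP).mp hη2
  have hPL : 2 * cs * (L θt - Lstar) ≤ ‖gradient L θt‖ ^ 2 :=
    hmin ▸ two_mul_sub_le_norm_sq_of_add_inner_add_le hcs (hconv θt θstar)
  have hsecond : bt * ∫ ω, ‖g ω‖ ^ 2 ∂μ ≤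
      M + Mv * ‖gradient L θt‖ ^ 2 + bt * ‖gradient L θt‖ ^ 2 := by
    rw [← hmean, integral_norm_sub_integral_sq hint hint2, le_div_iff₀ hbt0] at hvar
    rw [← hmean]
    linear_combination hvar
  have hdescent := integral_comp_sub_smul_le_of_lipschitz_gradient
    (hdiff.differentiable one_ne_zero) hLip θt (bt * η0) hint hint2 hintL
  rw [hmean, real_inner_self_eq_norm_sq] at hdescent
  set S := ‖gradient L θt‖ ^ 2
  calc (∫ ω, L (θt - (bt * η0) • g ω) ∂μ) - Lstar
      ≤ L θt - Lstar - bt * η0 * S + Lg / 2 * η0 ^ 2 * bt * (bt * ∫ ω, ‖g ω‖ ^ 2 ∂μ) := by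
        linear_combination hdescent
    _ ≤ L θt - Lstar - bt * η0 * S + Lg / 2 * η0 ^ 2 * bt * (M + Mv * S + bt * S) := by
        gcongr
    _ = L θt - Lstar - bt * η0 * S / 2 * (2 - Lg * η0 * (Mv + bt))
          + 1/2 * bt * η0 ^ 2 * Lg * M := by
        ring
    _ ≤ L θt - Lstar - bt * η0 * S / 2 + 1/2 * bt * η0 ^ 2 * Lg * M := by
        have := mul_le_mul_of_nonneg_left hstep (by positivity : 0 ≤ bt * η0 * S / 2)
        linarith
    _ ≤ (1 - bt * η0 * cs) * (L θt - Lstar) + 1/2 * bt * η0 ^ 2 * Lg * M := by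
        linear_combination (bt * η0 / 2) * hPL

theorem abs_one_step_bound {d : ℕ} {Ω : Type*} [MeasurableSpace Ω]
    (μ : Measure Ω) [IsProbabilityMeasure μ]
    (L : EuclideanSpace ℝ (Fin d) → ℝ) (cs Lg M Mv η0 bt Bmax Lstar : ℝ)
    (θstar θt : EuclideanSpace ℝ (Fin d)) (g : Ω → EuclideanSpace ℝ (Fin d))
    (hdiff : ContDiff ℝ 1 L) (hcs : 0 < cs)
    (hconv : ∀ θ1 θ2, L θ1 + ⟪gradient L θ1, θ2 - θ1⟫ + cs / 2 * ‖θ2 - θ1‖ ^ 2 ≤ L θ2)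
    (hmin : L θstar = Lstar) (hglob : ∀ θ, Lstar ≤ L θ)
    (hLg : 0 < Lg)
    (hLip : ∀ x y, ‖gradient L x - gradient L y‖ ≤ Lg * ‖x - y‖)
    (hM : 0 ≤ M) (hMv : 0 ≤ Mv)
    (hη : 0 < η0) (hη2 : η0 ≤ 1 / (Lg * (Mv + Bmax)))
    (hbt : 1 ≤ bt) (hbB : bt ≤ Bmax)
    (hint : Integrable g μ) (hint2 : Integrable (fun ω => ‖g ω‖ ^ 2) μ)
    (hintL : Integrable (fun ω => L (θt - (bt * η0) • g ω)) μ)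
    (hmean : ∫ ω, g ω ∂μ = gradient L θt)
    (hvar : ∫ ω, ‖g ω - gradient L θt‖ ^ 2 ∂μ ≤ (M + Mv * ‖gradient L θt‖ ^ 2) / bt) :
    (∫ ω, L (θt - (bt * η0) • g ω) ∂μ) - Lstar ≤
      (1 - bt * η0 * cs) * (L θt - Lstar) + 1/2 * bt * η0 ^ 2 * Lg * M :=
  abs_one_step_bound_general μ L cs Lg M Mv η0 bt Bmax Lstar θstar θt g hdiff hcs hconv hmin hLg
    hLip hη hη2 hbt hbB hint hint2 hintL hmean hvar
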